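/- The set WF of well-founded trees is a complete co-analytic set: (1) WF is a co-analytic subset of the Polish space (List ℕ → Bool), i.e., its complement is analytic; (2) for every Polish space X and every co-analytic subset C ⊆ X (a set whose complement is analytic) there exists a Borel measurable function f : X → (List ℕ → Bool), taking values in the set Trees, such that for all x ∈ X: x ∈ C if and only if f x ∈ WF; (3) WF is not a Borel subset of (List ℕ → Bool). -/

import Mathlib

/-- A tree on `ℕ`, coded by its characteristic function: a set of finite sequences closed
under initial segments. -/
def IsTree (T : List ℕ → Bool) : Prop :=
  ∀ s t : List ℕ, T s = true → t <+: s → T t = true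

/-- A tree (coded by a characteristic function) is ill-founded if it has an infinite branch. -/
def IllFounded (T : List ℕ → Bool) : Prop :=
  ∃ f : ℕ → ℕ, ∀ n : ℕ, T (List.ofFn fun i : Fin n => f i) = true

/-- The set of (characteristic functions of) trees. -/
def Trees : Set (List ℕ → Bool) := {T | IsTree T}

/-- The set of well-founded trees. -/
def WF : Set (List ℕ → Bool) := {T | IsTree T ∧ ¬ IllFounded T}

/-!
`WFᶜ` is the union of the open set of non-trees and the projection of the closed set of pairs
`(T, f)` with `f` a branch of `T`. Conversely, if `Cᶜ = range g` with `g : (ℕ → ℕ) → X`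
continuous, let `Tₓ = {s | x ∈ closure (g '' Nₛ)}`, where `Nₛ = basicOpen s` is the set of
sequences extending `s`. It depends measurably on `x`, and a branch `y` of `Tₓ` makes `x` a
cluster point of `g` at `y`, hence `x = g y`; so `Tₓ` is ill-founded iff `x ∉ C`.

For non-Borelness, read `β : ℕ → ℕ` as the code of a set of pairs of finite sequences; the sets
`{y | ∃ z, ∀ n, (y|n, z|n) ∈ β}` (the `y` with `sectionTree β y` ill-founded) are exactly the
analytic subsets of `ℕ → ℕ`, and diagonalising gives an analytic set `D` whose complement is not
analytic. Reducing `Dᶜ` to `WF` would make `Dᶜ` Borel, hence analytic.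
-/

open MeasureTheory Set Filter Topology PiNat

instance : PolishSpace (List ℕ → Bool) := {}

namespace PiNat

variable {E : ℕ → Type*} [∀ n, TopologicalSpace (E n)] [∀ n, DiscreteTopology (E n)]

lemma nhds_hasBasis_cylinder (x : ∀ n, E n) : (𝓝 x).HasBasis (fun _ => True) (cylinder x) := by
  refine ⟨fun U => ⟨fun hU => ?_, fun ⟨n, _, hn⟩ =>
    mem_of_superset ((isOpen_cylinder E x n).mem_nhds (self_mem_cylinder x n)) hn⟩⟩
  obtain ⟨_, ⟨y, n, rfl⟩, hxy, hU⟩ := (isTopologicalBasis_cylinders E).mem_nhds_iff.1 hU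
  exact ⟨n, trivial, (mem_cylinder_iff_eq.1 hxy).symm ▸ hU⟩

end PiNat

lemma MapClusterPt.eq_of_continuousAt {α X : Type*} [TopologicalSpace α] [TopologicalSpace X]
    [T2Space X] {g : α → X} {a : α} {x : X} (h : MapClusterPt x (𝓝 a) g) (hg : ContinuousAt g a) :
    g a = x := by
  by_contra hne
  exact clusterPt_iff_not_disjoint.1 (ClusterPt.mono h hg) (disjoint_nhds_nhds.2 (Ne.symm hne))

lemma IsLocallyConstant.continuous_apply {X ι B : Type*} [TopologicalSpace X]
    [TopologicalSpace B] {g : X → ι} (hg : IsLocallyConstant g) {F : X → ι → B}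
    (hF : ∀ i, Continuous fun x => F x i) : Continuous fun x => F x (g x) :=
  continuous_iff_continuousAt.2 fun x =>
    (hF (g x)).continuousAt.congr ((hg.eventually_eq x).mono fun y hy => congrArg (F y) hy.symm)

namespace WellFoundedTrees

def initSeg (f : ℕ → ℕ) (n : ℕ) : List ℕ := List.ofFn fun i : Fin n => f i

@[simp] lemma length_initSeg (f : ℕ → ℕ) (n : ℕ) : (initSeg f n).length = n := by simp [initSeg]

lemma initSeg_eq_initSeg_iff {f g : ℕ → ℕ} {n : ℕ} :
    initSeg f n = initSeg g n ↔ f ∈ cylinder g n := by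
  simp [initSeg, List.ofFn_inj, funext_iff, Fin.forall_iff, mem_cylinder_iff]

lemma initSeg_length_eq_of_prefix {f : ℕ → ℕ} {n : ℕ} {t : List ℕ} (h : t <+: initSeg f n) :
    initSeg f t.length = t := by
  refine List.ext_getElem (by simp) fun _ _ hi => ?_
  simpa [initSeg] using (h.getElem hi).symm

lemma isLocallyConstant_initSeg (n : ℕ) : IsLocallyConstant fun f : ℕ → ℕ => initSeg f n :=
  ((IsLocallyConstant.iff_continuous fun (f : ℕ → ℕ) (i : Fin n) => f i).2
    (continuous_pi fun _ => continuous_apply _)).comp List.ofFn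

lemma illFounded_iff {T : List ℕ → Bool} : IllFounded T ↔ ∃ f, ∀ n, T (initSeg f n) = true :=
  Iff.rfl

lemma isClosed_trees : IsClosed Trees := by
  have hTrees : Trees = ⋂ (s) (t) (_ : t <+: s), {T : List ℕ → Bool | T s = true → T t = true} := by
    ext T
    simp only [Trees, IsTree, mem_ofPred_eq, mem_iInter]
    exact forall₂_congr fun _ _ => Imp.swap
  rw [hTrees]
  exact isClosed_iInter fun s => isClosed_iInter fun t => isClosed_iInter fun _ =>
    isClosed_imp ((isOpen_discrete {true}).preimage (continuous_apply (A := fun _ => Bool) s))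
      ((isClosed_discrete {true}).preimage (continuous_apply (A := fun _ => Bool) t))

lemma analyticSet_illFounded : AnalyticSet {T : List ℕ → Bool | IllFounded T} := by
  have hclosed : IsClosed {p : (List ℕ → Bool) × (ℕ → ℕ) | ∀ n, p.1 (initSeg p.2 n) = true} := by
    simp only [ofPred_forall]
    exact isClosed_iInter fun n => isClosed_eq
      (((isLocallyConstant_initSeg n).comp_continuous continuous_snd).continuous_apply
        fun l => (continuous_apply l).comp continuous_fst) continuous_const
  convert hclosed.analyticSet.image_of_continuous continuous_fst
  ext T
  simp [illFounded_iff]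

lemma analyticSet_compl_WF : AnalyticSet WFᶜ := by
  have hWF : WFᶜ = Treesᶜ ∪ {T | IllFounded T} := by
    ext T
    simp only [WF, Trees, mem_compl_iff, mem_union, mem_ofPred_eq, not_and_or, not_not]
  rw [hWF, union_eq_iUnion]
  refine AnalyticSet.iUnion fun b => ?_
  cases b
  · exact analyticSet_illFounded
  · exact isClosed_trees.isOpen_compl.measurableSet.analyticSet

def basicOpen (s : List ℕ) : Set (ℕ → ℕ) := {w | initSeg w s.length = s}

lemma basicOpen_initSeg (y : ℕ → ℕ) (n : ℕ) : basicOpen (initSeg y n) = cylinder y n := by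
  ext w; simp [basicOpen, initSeg_eq_initSeg_iff]

lemma basicOpen_anti {s t : List ℕ} (h : t <+: s) : basicOpen s ⊆ basicOpen t := fun _ hw =>
  initSeg_length_eq_of_prefix (n := s.length) (hw.symm ▸ h)

section Reduction

variable {X : Type*} [TopologicalSpace X]

open Classical in
noncomputable def closureTree (g : (ℕ → ℕ) → X) (x : X) (s : List ℕ) : Bool :=
  x ∈ closure (g '' basicOpen s)

lemma isTree_closureTree (g : (ℕ → ℕ) → X) (x : X) : IsTree (closureTree g x) := by
  intro s t hs hts
  simp only [closureTree, decide_eq_true_eq] at hs ⊢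
  exact closure_mono (image_mono (basicOpen_anti hts)) hs

lemma measurable_closureTree [MeasurableSpace X] [OpensMeasurableSpace X] (g : (ℕ → ℕ) → X) :
    Measurable (closureTree g) :=
  measurable_pi_lambda _ fun s => measurable_to_bool <| by
    simp only [closureTree, preimage, mem_singleton_iff, decide_eq_true_eq, ofPred_mem_eq]
    exact isClosed_closure.measurableSet

lemma illFounded_closureTree_iff [T2Space X] {g : (ℕ → ℕ) → X} (hg : Continuous g) (x : X) :
    IllFounded (closureTree g x) ↔ x ∈ range g := by
  simp only [illFounded_iff, closureTree, decide_eq_true_eq, basicOpen_initSeg]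
  constructor
  · rintro ⟨y, hy⟩
    exact ⟨y, MapClusterPt.eq_of_continuousAt
      (((nhds_hasBasis_cylinder y).map g).clusterPt_iff_forall_mem_closure.2 fun n _ => hy n)
      hg.continuousAt⟩
  · rintro ⟨y, rfl⟩
    exact ⟨y, fun n => subset_closure (mem_image_of_mem g (self_mem_cylinder y n))⟩

lemma exists_measurable_reduction_to_WF [T2Space X] [MeasurableSpace X] [OpensMeasurableSpace X]
    {C : Set X} (hC : AnalyticSet Cᶜ) :
    ∃ f : X → (List ℕ → Bool), Measurable f ∧ (∀ x, f x ∈ Trees) ∧ ∀ x, x ∈ C ↔ f x ∈ WF := by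
  rw [AnalyticSet] at hC
  rcases hC with hC | ⟨g, hg, hCg⟩
  · have hemptyTree : (fun _ => false) ∈ WF :=
      ⟨fun _ _ h _ => h, fun ⟨_, hf⟩ => Bool.false_ne_true (hf 0)⟩
    exact ⟨fun _ _ => false, measurable_const, fun _ => hemptyTree.1,
      fun x => iff_of_true (compl_empty_iff.1 hC ▸ mem_univ x) hemptyTree⟩
  · refine ⟨closureTree g, measurable_closureTree g, isTree_closureTree g, fun x => ?_⟩
    rw [← not_iff_not, ← mem_compl_iff, ← hCg, ← illFounded_closureTree_iff hg]
    simp [WF, isTree_closureTree]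

end Reduction

def sectionTree (β y : ℕ → ℕ) (t : List ℕ) : Bool :=
  β (Encodable.encode (initSeg y t.length, t)) = 1

lemma illFounded_sectionTree_iff {β y : ℕ → ℕ} :
    IllFounded (sectionTree β y) ↔
      ∃ z, ∀ n, β (Encodable.encode (initSeg y n, initSeg z n)) = 1 := by
  simp [illFounded_iff, sectionTree]

lemma eq_of_forall_exists_mem_cylinder {g : (ℕ → ℕ) → ℕ → ℕ} (hg : Continuous g) {y z : ℕ → ℕ}
    (h : ∀ n, ∃ w ∈ cylinder z n, g w ∈ cylinder y n) : g z = y := by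
  refine MapClusterPt.eq_of_continuousAt ?_ hg.continuousAt
  refine (nhds_hasBasis_cylinder y).mapClusterPt_iff_frequently.2
    fun m _ => (nhds_hasBasis_cylinder z).frequently_iff.2 fun n _ => ?_
  obtain ⟨w, hwz, hwy⟩ := h (max n m)
  exact ⟨w, cylinder_anti z (le_max_left n m) hwz, cylinder_anti y (le_max_right n m) hwy⟩

open Classical in
lemma exists_sectionTree_of_analyticSet {A : Set (ℕ → ℕ)} (hA : AnalyticSet A) :
    ∃ β, ∀ y, y ∈ A ↔ IllFounded (sectionTree β y) := by
  rw [AnalyticSet] at hA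
  rcases hA with rfl | ⟨g, hg, rfl⟩
  · refine ⟨0, fun y => ?_⟩
    simp [illFounded_sectionTree_iff]
  let R : Set (List ℕ × List ℕ) :=
    range fun p : (ℕ → ℕ) × ℕ => (initSeg (g p.1) p.2, initSeg p.1 p.2)
  refine ⟨fun k => if k ∈ Encodable.encode '' R then 1 else 0, fun y => ?_⟩
  simp only [illFounded_sectionTree_iff, ite_eq_left_iff, zero_ne_one, imp_false, not_not,
    Encodable.encode_injective.mem_set_image]
  constructor
  · rintro ⟨z, rfl⟩
    exact ⟨z, fun n => ⟨(z, n), rfl⟩⟩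
  · rintro ⟨z, hz⟩
    refine ⟨z, eq_of_forall_exists_mem_cylinder hg fun n => ?_⟩
    obtain ⟨⟨w, m⟩, hw⟩ := hz n
    obtain ⟨hgw, hwz⟩ := Prod.mk.inj hw
    obtain rfl : m = n := by simpa using congrArg List.length hgw
    exact ⟨w, initSeg_eq_initSeg_iff.1 hwz, initSeg_eq_initSeg_iff.1 hgw⟩

lemma continuous_sectionTree_self : Continuous fun y => sectionTree y y :=
  continuous_pi fun t =>
    (((isLocallyConstant_initSeg t.length).comp fun l => (l, t)).comp
      Encodable.encode).continuous_apply (F := fun y k => decide (y k = 1)) fun k =>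
        (continuous_of_discreteTopology (f := fun n : ℕ => decide (n = 1))).comp
          (continuous_apply k)

lemma exists_analyticSet_not_analyticSet_compl :
    ∃ D : Set (ℕ → ℕ), AnalyticSet D ∧ ¬ AnalyticSet Dᶜ := by
  refine ⟨_, analyticSet_illFounded.preimage continuous_sectionTree_self, fun h => ?_⟩
  obtain ⟨β, hβ⟩ := exists_sectionTree_of_analyticSet h
  exact (not_iff_self (hβ β)).elim

end WellFoundedTrees

/-- The set of well-founded trees is a complete co-analytic set: its complement is analytic,
every co-analytic subset of a Polish space Borel-reduces to it (via a map taking values in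
the trees), and it is not Borel. -/
theorem WF_complete_coanalytic :
    MeasureTheory.AnalyticSet WFᶜ ∧
    (∀ (X : Type) [TopologicalSpace X] [PolishSpace X] [MeasurableSpace X] [BorelSpace X]
      (C : Set X), MeasureTheory.AnalyticSet Cᶜ →
      ∃ f : X → (List ℕ → Bool), Measurable f ∧ (∀ x, f x ∈ Trees) ∧
        ∀ x : X, x ∈ C ↔ f x ∈ WF) ∧
    ¬ MeasurableSet WF := by
  refine ⟨WellFoundedTrees.analyticSet_compl_WF,
    fun X _ _ _ _ C hC => WellFoundedTrees.exists_measurable_reduction_to_WF hC, fun hWF => ?_⟩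
  obtain ⟨D, hD, hDc⟩ := WellFoundedTrees.exists_analyticSet_not_analyticSet_compl
  obtain ⟨f, hf, -, hDf⟩ :=
    WellFoundedTrees.exists_measurable_reduction_to_WF (C := Dᶜ) (by rwa [compl_compl])
  have hDWF : Dᶜ = f ⁻¹' WF := Set.ext hDf
  exact hDc (hDWF ▸ hf hWF).analyticSet
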